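/- arXiv:2506.15206 — 3 statements merged into one kernel-verified Lean document; each statement's English description precedes it below -/
import Mathlib

section
/- Let X be a Tychonoff (completely regular Hausdorff) space. The following are equivalent: (i) X is a k_ℝ-space; (ii) X is strongly functionally generated by the family of all compact subsets of X; (iii) X is functionally generated by the family of all compact subsets of X; (iv) X is the image of a locally compact Hausdorff space under an R-quotient map; (v) X is the image under an R-quotient map of a space Y that is a k-space (i.e. a set A ⊆ Y is closed whenever A ∩ K is closed in K for every compact K ⊆ Y); (vi) X is the image of a k_ℝ-space under an R-quotient map. -/
open Set Filter Topology

universe u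

/-- A function `f : X → ℝ` is `k`-continuous if its restriction to every compact subset
of `X` (with the subspace topology) is continuous. -/
def KContinuous {X : Type*} [TopologicalSpace X] (f : X → ℝ) : Prop :=
  ∀ K : Set X, IsCompact K → Continuous fun x : K => f x

/-- A topological space `X` is a `k_ℝ`-space if every `k`-continuous real-valued function
on `X` is continuous. -/
def IsKRSpace (X : Type u) [TopologicalSpace X] : Prop :=
  ∀ f : X → ℝ, KContinuous f → Continuous f

/-- A map `p : Y → X` is `R`-quotient if it is continuous, surjective, and every function
`φ : X → ℝ` such that `φ ∘ p` is continuous is itself continuous. -/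
def IsRQuotient {Y X : Type*} [TopologicalSpace Y] [TopologicalSpace X] (p : Y → X) : Prop :=
  Continuous p ∧ Function.Surjective p ∧ ∀ φ : X → ℝ, Continuous (φ ∘ p) → Continuous φ

/-- `X` is strongly functionally generated by a family `𝓜` of subsets if every
discontinuous `f : X → ℝ` has a discontinuous restriction to some `M ∈ 𝓜`. -/
def StronglyFunctionallyGeneratedBy (X : Type u) [TopologicalSpace X] (𝓜 : Set (Set X)) : Prop :=
  ∀ f : X → ℝ, ¬ Continuous f → ∃ M ∈ 𝓜, ¬ Continuous fun x : M => f x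

/-- `X` is functionally generated by a family `𝓜` of subsets if for every discontinuous
`f : X → ℝ` there is `M ∈ 𝓜` such that `f ↾ M` has no continuous extension to `X`. -/
def FunctionallyGeneratedBy (X : Type u) [TopologicalSpace X] (𝓜 : Set (Set X)) : Prop :=
  ∀ f : X → ℝ, ¬ Continuous f →
    ∃ M ∈ 𝓜, ¬ ∃ g : X → ℝ, Continuous g ∧ ∀ x ∈ M, g x = f x

/-- A space `Y` is a `k`-space if every set `A ⊆ Y` is closed whenever `A ∩ K` is closed
in `K` for every compact `K ⊆ Y`. -/
def IsKSpace (Y : Type u) [TopologicalSpace Y] : Prop :=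
  ∀ A : Set Y, (∀ K : Set Y, IsCompact K → IsClosed ((fun y : K => (y : Y)) ⁻¹' A)) → IsClosed A

/-- Key extension lemma: a continuous real function on a compact subset of a Tychonoff
space extends continuously to the whole space. -/
lemma exists_extension_of_compact {X : Type u} [TopologicalSpace X] [CompletelyRegularSpace X]
    [T2Space X] {K : Set X} (hK : IsCompact K) {f : X → ℝ}
    (hf : Continuous fun x : K => f x) :
    ∃ g : X → ℝ, Continuous g ∧ ∀ x ∈ K, g x = f x := by
  haveI : T35Space X := {}
  set e : X → StoneCech X := stoneCechUnit with he
  have hecont : Continuous e := continuous_stoneCechUnit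
  have heinj : Function.Injective e := injective_stoneCechUnit_of_t35Space
  have hKc : IsCompact (e '' K) := hK.image hecont
  haveI : CompactSpace K := isCompact_iff_compactSpace.mp hK
  let q : K → e '' K := fun x => ⟨e x, mem_image_of_mem e x.2⟩
  have hqbij : Function.Bijective q := by
    constructor
    · intro a b hab
      exact Subtype.ext (heinj (congrArg Subtype.val hab))
    · rintro ⟨y, x, hx, rfl⟩
      exact ⟨⟨x, hx⟩, rfl⟩
  have hqcont : Continuous q := (hecont.comp continuous_subtype_val).subtype_mk _
  let E : K ≃ e '' K := Equiv.ofBijective q hqbij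
  have hEcont : Continuous E := hqcont
  let H : K ≃ₜ e '' K := Continuous.homeoOfEquivCompactToT2 (f := E) hEcont
  let h : C(e '' K, ℝ) := ⟨(fun x : K => f x) ∘ H.symm, hf.comp H.symm.continuous⟩
  obtain ⟨G, hG⟩ := h.exists_restrict_eq hKc.isClosed
  refine ⟨fun x => G (e x), G.continuous.comp hecont, ?_⟩
  intro x hx
  have h1 : H ⟨x, hx⟩ = ⟨e x, mem_image_of_mem e hx⟩ := rfl
  have h2 : H.symm ⟨e x, mem_image_of_mem e hx⟩ = ⟨x, hx⟩ := by
    rw [← h1, Homeomorph.symm_apply_apply]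
  have := congrFun (congrArg (fun (φ : C(e '' K, ℝ)) => (φ : e '' K → ℝ)) hG)
    ⟨e x, mem_image_of_mem e hx⟩
  simpa [h, h2] using this

/-- A locally compact Hausdorff space is a k-space. -/
lemma isKSpace_of_locallyCompact (Y : Type u) [TopologicalSpace Y] [LocallyCompactSpace Y]
    [T2Space Y] : IsKSpace Y := by
  intro A hA
  have : closure A ⊆ A := by
    intro x hx
    obtain ⟨K, hKc, hKn⟩ := exists_compact_mem_nhds x
    have hAK : IsClosed (A ∩ K) := by
      have h1 : IsClosed ((fun y : K => (y : Y)) ⁻¹' A) := hA K hKc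
      have h2 := (hKc.isClosed.isClosedEmbedding_subtypeVal.isClosedMap _ h1)
      rwa [Subtype.image_preimage_coe, Set.inter_comm] at h2
    have hx2 : x ∈ closure (A ∩ K) := by
      rw [mem_closure_iff_nhds] at hx ⊢
      intro t ht
      obtain ⟨y, hy1, hy2⟩ := hx (t ∩ K) (inter_mem ht hKn)
      exact ⟨y, hy1.1, hy2, hy1.2⟩
    exact (hAK.closure_eq ▸ hx2).1
  exact isClosed_of_closure_subset this

/-- A k-space is a k_ℝ-space. -/
lemma isKRSpace_of_isKSpace (Y : Type u) [TopologicalSpace Y] (h : IsKSpace Y) :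
    IsKRSpace Y := by
  intro f hf
  rw [continuous_iff_isClosed]
  intro C hC
  refine h _ fun K hK => ?_
  exact hC.preimage (hf K hK)

/-- The disjoint union of the compact subsets of a locally compact candidate. -/
lemma sigma_locallyCompact {ι : Type u} {σ : ι → Type u} [∀ i, TopologicalSpace (σ i)]
    [∀ i, LocallyCompactSpace (σ i)] : LocallyCompactSpace (Σ i, σ i) := by
  constructor
  rintro ⟨i, x⟩ n hn
  have hn' : (Sigma.mk i) ⁻¹' n ∈ 𝓝 x := (continuous_sigmaMk (i := i)).continuousAt hn
  obtain ⟨s, hs1, hs2, hs3⟩ := LocallyCompactSpace.local_compact_nhds x _ hn'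
  refine ⟨Sigma.mk i '' s, ?_, ?_, hs3.image continuous_sigmaMk⟩
  · exact isOpenMap_sigmaMk.image_mem_nhds hs1
  · exact (Set.image_mono hs2).trans (Set.image_preimage_subset _ _)

theorem kR_space_tfae (X : Type u) [TopologicalSpace X] [CompletelyRegularSpace X] [T2Space X] :
    List.TFAE
      [ IsKRSpace X,
        StronglyFunctionallyGeneratedBy X {K : Set X | IsCompact K},
        FunctionallyGeneratedBy X {K : Set X | IsCompact K},
        ∃ (Y : Type u) (_ : TopologicalSpace Y) (_ : LocallyCompactSpace Y) (_ : T2Space Y),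
          ∃ p : Y → X, IsRQuotient p,
        ∃ (Y : Type u) (_ : TopologicalSpace Y), IsKSpace Y ∧ ∃ p : Y → X, IsRQuotient p,
        ∃ (Y : Type u) (_ : TopologicalSpace Y), IsKRSpace Y ∧ ∃ p : Y → X, IsRQuotient p ] := by
  tfae_have 1 → 2 := by
    intro h f hf
    by_contra hc
    push_neg at hc
    exact hf (h f fun K hK => hc K hK)
  tfae_have 2 → 3 := by
    intro h f hf
    obtain ⟨M, hM, hMd⟩ := h f hf
    refine ⟨M, hM, ?_⟩
    rintro ⟨g, hg, hgf⟩
    apply hMd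
    have : (fun x : M => f x) = fun x : M => g x := by
      ext x; exact (hgf x x.2).symm
    rw [this]
    exact hg.comp continuous_subtype_val
  tfae_have 3 → 1 := by
    intro h f hf
    by_contra hc
    obtain ⟨M, hM, hMd⟩ := h f hc
    exact hMd (exists_extension_of_compact hM (hf M hM))
  tfae_have 1 → 4 := by
    intro h
    refine ⟨Σ K : {K : Set X // IsCompact K}, ↥K.1, inferInstance, ?_, ?_, ?_⟩
    · haveI : ∀ K : {K : Set X // IsCompact K}, CompactSpace ↥K.1 :=
        fun K => isCompact_iff_compactSpace.mp K.2
      exact sigma_locallyCompact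
    · infer_instance
    · refine ⟨fun y => (y.2 : X), continuous_sigma fun K => continuous_subtype_val, ?_, ?_⟩
      · exact fun x => ⟨⟨⟨{x}, isCompact_singleton⟩, x, rfl⟩, rfl⟩
      · intro φ hφ
        refine h φ fun K hK => ?_
        have : (fun x : K => φ x) =
            (fun y : Σ K : {K : Set X // IsCompact K}, ↥K.1 => φ (y.2 : X)) ∘
              Sigma.mk (⟨K, hK⟩ : {K : Set X // IsCompact K}) := rfl
        rw [this]
        exact hφ.comp continuous_sigmaMk
  tfae_have 4 → 5 := by
    rintro ⟨Y, _, _, _, p, hp⟩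
    exact ⟨Y, inferInstance, isKSpace_of_locallyCompact Y, p, hp⟩
  tfae_have 5 → 6 := by
    rintro ⟨Y, _, hY, p, hp⟩
    exact ⟨Y, inferInstance, isKRSpace_of_isKSpace Y hY, p, hp⟩
  tfae_have 6 → 1 := by
    rintro ⟨Y, _, hY, p, hpc, hps, hpq⟩
    intro f hf
    apply hpq
    apply hY
    intro K hK
    have himg : IsCompact (p '' K) := hK.image hpc
    have : (fun y : K => (f ∘ p) y) =
        (fun x : p '' K => f x) ∘ (fun y : K => (⟨p y, mem_image_of_mem p y.2⟩ : p '' K)) := rfl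
    rw [this]
    exact (hf _ himg).comp ((hpc.comp continuous_subtype_val).subtype_mk _)
  tfae_finish
end

section
/- Let X be a Tychonoff (completely regular Hausdorff) space. The following are equivalent: (i) C_p(X) is separable; (ii) X admits a condensation onto a separable metrizable space, i.e. there is a continuous bijection from X onto some separable metrizable space; (iii) X is submetrizable (there is a continuous injection from X into some metrizable space) and the cardinality of X is at most the continuum 𝔠. -/
open Set Filter Topology TopologicalSpace Cardinal

universe u

namespace CpSepAux

noncomputable section

/-- geometric scale -/
def rr (n : ℕ) : ℝ := (1/2 : ℝ) ^ n

lemma rr_pos (n : ℕ) : 0 < rr n := by unfold rr; positivity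

lemma rr_lt {ε : ℝ} (hε : 0 < ε) : ∃ n, rr n < ε := by
  obtain ⟨n, hn⟩ := exists_pow_lt_of_lt_one hε (by norm_num : (1/2:ℝ) < 1)
  exact ⟨n, hn⟩

/-- the bump function at scale `n` -/
def phi (n : ℕ) (t : ℝ) : ℝ := max 0 (min 1 ((5/4 * rr n - t) / (rr n / 4)))

lemma phi_nonneg (n : ℕ) (t : ℝ) : 0 ≤ phi n t := le_max_left _ _

lemma phi_le_one (n : ℕ) (t : ℝ) : phi n t ≤ 1 :=
  max_le (by norm_num) (min_le_left _ _)

lemma phi_one {n : ℕ} {t : ℝ} (h : t ≤ rr n) : phi n t = 1 := by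
  have h4 : (0:ℝ) < rr n / 4 := by have := rr_pos n; linarith
  have : (1:ℝ) ≤ (5/4 * rr n - t) / (rr n / 4) := by
    rw [le_div_iff₀ h4]; linarith
  rw [phi, min_eq_left this, max_eq_right (by norm_num)]

lemma phi_zero {n : ℕ} {t : ℝ} (h : 5/4 * rr n ≤ t) : phi n t = 0 := by
  have h4 : (0:ℝ) < rr n / 4 := by have := rr_pos n; linarith
  have : (5/4 * rr n - t) / (rr n / 4) ≤ 0 := div_nonpos_iff.2 (Or.inr ⟨by linarith, h4.le⟩)
  rw [phi, max_eq_left (le_trans (min_le_right _ _) this)]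

lemma phi_pos {n : ℕ} {t : ℝ} (h : 0 < phi n t) : t < 5/4 * rr n := by
  by_contra hc; push_neg at hc
  rw [phi_zero hc] at h; exact lt_irrefl _ h

lemma phi_big {n : ℕ} {t : ℝ} (h : 1/2 < phi n t) : t < 9/8 * rr n := by
  have h4 : (0:ℝ) < rr n / 4 := by have := rr_pos n; linarith
  have h1 : (1:ℝ)/2 < min 1 ((5/4 * rr n - t) / (rr n / 4)) := by
    rcases max_cases (0:ℝ) (min 1 ((5/4 * rr n - t) / (rr n / 4))) with ⟨he, _⟩ | ⟨he, _⟩ <;>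
      rw [phi] at h <;> rw [he] at h
    · norm_num at h
    · exact h
  have h2 : (1:ℝ)/2 < (5/4 * rr n - t) / (rr n / 4) := lt_of_lt_of_le h1 (min_le_right _ _)
  rw [lt_div_iff₀ h4] at h2; linarith

lemma phi_lip (n : ℕ) (s t : ℝ) : |phi n s - phi n t| ≤ 4 / rr n * |s - t| := by
  have h4 : (0:ℝ) < rr n / 4 := by have := rr_pos n; linarith
  have h1 : |phi n s - phi n t| ≤
      |min 1 ((5/4 * rr n - s) / (rr n / 4)) - min 1 ((5/4 * rr n - t) / (rr n / 4))| := by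
    rw [phi, phi, max_comm 0 _, max_comm 0 _]
    exact abs_max_sub_max_le_abs _ _ _
  have h2 : |min 1 ((5/4 * rr n - s) / (rr n / 4)) - min 1 ((5/4 * rr n - t) / (rr n / 4))| ≤
      |(5/4 * rr n - s) / (rr n / 4) - (5/4 * rr n - t) / (rr n / 4)| := by
    rw [min_comm 1 _, min_comm 1 _]
    have := abs_min_sub_min_le_max ((5/4 * rr n - s) / (rr n / 4)) 1
      ((5/4 * rr n - t) / (rr n / 4)) 1
    simpa using this
  have h3 : (5/4 * rr n - s) / (rr n / 4) - (5/4 * rr n - t) / (rr n / 4) = (t - s) / (rr n / 4) := by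
    field_simp; ring
  calc |phi n s - phi n t| ≤ |(t - s) / (rr n / 4)| := by rw [← h3]; exact le_trans h1 h2
    _ = |t - s| / (rr n / 4) := by rw [abs_div, abs_of_pos h4]
    _ = 4 / rr n * |s - t| := by rw [abs_sub_comm]; field_simp

variable {M : Type u} [MetricSpace M]

/-- Continuity (indeed a Lipschitz property) of a sup of uniformly Lipschitz, uniformly
bounded, nonnegative functions. -/
lemma cont_sup {ι : Sort*} {u : ι → M → ℝ} {K : ℝ}
    (h0 : ∀ i x, 0 ≤ u i x) (h1 : ∀ i x, u i x ≤ 1)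
    (hl : ∀ i x y, |u i x - u i y| ≤ K * dist x y) :
    Continuous fun x => ⨆ i, u i x := by
  cases isEmpty_or_nonempty ι with
  | inl h =>
    have : (fun x : M => ⨆ i, u i x) = fun _ => 0 := by
      funext x; exact Real.iSup_of_isEmpty _
    rw [this]; exact continuous_const
  | inr h =>
    have bdd : ∀ x : M, BddAbove (Set.range fun i => u i x) := fun x =>
      ⟨1, by rintro _ ⟨i, rfl⟩; exact h1 i x⟩
    have key : ∀ x y : M, (⨆ i, u i x) ≤ (⨆ i, u i y) + K * dist x y := by
      intro x y
      refine ciSup_le fun i => ?_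
      have h5 : u i x ≤ u i y + K * dist x y := by
        have := hl i x y
        have := abs_sub_le_iff.1 this
        linarith [this.1]
      exact le_trans h5 (by linarith [le_ciSup (bdd y) i])
    have habs : ∀ x y : M, |(⨆ i, u i x) - (⨆ i, u i y)| ≤ K * dist x y := by
      intro x y
      rw [abs_sub_le_iff]
      constructor
      · linarith [key x y]
      · have := key y x; rw [dist_comm y x] at this; linarith
    rw [Metric.continuous_iff]
    intro b ε hε
    set K' : ℝ := max K 1 with hK'
    have hK'pos : 0 < K' := lt_of_lt_of_le one_pos (le_max_right _ _)
    refine ⟨ε / K', by positivity, fun a ha => ?_⟩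
    rw [Real.dist_eq]
    calc |(⨆ i, u i a) - (⨆ i, u i b)| ≤ K * dist a b := habs a b
      _ ≤ K' * dist a b := mul_le_mul_of_nonneg_right (le_max_left _ _) dist_nonneg
      _ < K' * (ε / K') := by exact mul_lt_mul_of_pos_left ha hK'pos
      _ = ε := by field_simp

/-- least point (wrt a fixed well-order) whose `rr p`-ball contains `x` -/
def idx (p : ℕ) (x : M) : M :=
  (IsWellFounded.wf (r := (WellOrderingRel : M → M → Prop))).min
    {i | dist x i < rr p} ⟨x, by simp [rr_pos]⟩

lemma idx_dist (p : ℕ) (x : M) : dist x (idx p x) < rr p := by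
  have h := WellFounded.min_mem
    (IsWellFounded.wf (r := (WellOrderingRel : M → M → Prop)))
    {i : M | dist x i < rr p} ⟨x, by simp [rr_pos]⟩
  exact h

lemma idx_min {p : ℕ} {x j : M} (h : dist x j < rr p) : ¬ WellOrderingRel j (idx p x) := by
  have h2 := WellFounded.not_lt_min
    (IsWellFounded.wf (r := (WellOrderingRel : M → M → Prop)))
    {i : M | dist x i < rr p} h
  exact h2

/-- The centers at stage `n` of the Rudin construction for the ball cover at scale `p`. -/
def ctr (p : ℕ) : ℕ → Set M
  | n => {x | 3 * rr n ≤ rr p ∧ (∀ z, dist z x < 3 * rr n → dist z (idx p x) < rr p) ∧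
      ∀ m, m < n → ∀ y ∈ ctr p m, rr m ≤ dist x y}
  termination_by n => n

lemma mem_ctr {p n : ℕ} {x : M} : x ∈ ctr p n ↔ (3 * rr n ≤ rr p ∧
    (∀ z, dist z x < 3 * rr n → dist z (idx p x) < rr p) ∧
      ∀ m, m < n → ∀ y ∈ ctr p m, rr m ≤ dist x y) := by
  rw [ctr]; rfl

/-- centers at the same stage with different indices are far apart -/
lemma sep {p n : ℕ} {w w' : M} (hw : w ∈ ctr p n) (hw' : w' ∈ ctr p n)
    (hne : idx p w ≠ idx p w') : 3 * rr n ≤ dist w w' := by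
  by_contra hc; push_neg at hc
  rcases trichotomous_of (WellOrderingRel : M → M → Prop) (idx p w) (idx p w') with h | h | h
  · have h1 : rr p ≤ dist w' (idx p w) := by
      by_contra h2; push_neg at h2; exact idx_min h2 h
    have h3 := (mem_ctr.1 hw).2.1 w' (by rw [dist_comm]; exact hc)
    linarith
  · exact hne h
  · have h1 : rr p ≤ dist w (idx p w') := by
      by_contra h2; push_neg at h2; exact idx_min h2 h
    have h3 := (mem_ctr.1 hw').2.1 w hc
    linarith

/-- every point is covered at some stage -/
lemma cover (p : ℕ) (x : M) : ∃ n, ∃ z ∈ ctr p n, dist x z < rr n := by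
  by_contra h; push_neg at h
  have hd : dist x (idx p x) < rr p := idx_dist p x
  obtain ⟨n, hn⟩ := rr_lt (show 0 < (rr p - dist x (idx p x))/3 by linarith)
  have hx : x ∈ ctr p n := by
    rw [mem_ctr]
    refine ⟨by nlinarith [dist_nonneg (x := x) (y := idx p x)], fun z hz => ?_,
      fun m _ y hy => h m y hy⟩
    have := dist_triangle z x (idx p x)
    linarith
  have := h n x hx
  rw [dist_self] at this
  linarith [rr_pos n]

variable (c : M → ℝ)

/-- the "which component" function -/
def gfun (p n : ℕ) (x : M) : ℝ := ⨆ w : ctr (M := M) p n, phi n (dist x w)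

/-- the "label of the component" function -/
def ffun (p n : ℕ) (x : M) : ℝ := ⨆ w : ctr (M := M) p n, c (idx p (w : M)) * phi n (dist x w)

variable (hc0 : ∀ i, 0 < c i) (hc1 : ∀ i, c i < 1)

section
include hc0 hc1

omit hc0 hc1 in
lemma gfun_cont (p n : ℕ) : Continuous (gfun (M := M) p n) := by
  apply cont_sup (K := 4 / rr n)
  · exact fun i x => phi_nonneg _ _
  · exact fun i x => phi_le_one _ _
  · intro i x y
    calc |phi n (dist x i) - phi n (dist y i)| ≤ 4 / rr n * |dist x i - dist y i| :=
        phi_lip n _ _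
      _ ≤ 4 / rr n * dist x y := by
        exact mul_le_mul_of_nonneg_left (abs_dist_sub_le _ _ _)
          (div_nonneg (by norm_num) (rr_pos n).le)

lemma ffun_cont (p n : ℕ) : Continuous (ffun (M := M) c p n) := by
  apply cont_sup (K := 4 / rr n)
  · exact fun i x => mul_nonneg (hc0 _).le (phi_nonneg _ _)
  · exact fun i x => mul_le_one₀ (hc1 _).le (phi_nonneg _ _) (phi_le_one _ _)
  · intro i x y
    have : |c (idx p (i:M)) * phi n (dist x i) - c (idx p (i:M)) * phi n (dist y i)| =
        c (idx p (i:M)) * |phi n (dist x i) - phi n (dist y i)| := by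
      rw [← mul_sub, abs_mul, abs_of_pos (hc0 _)]
    rw [this]
    calc c (idx p (i:M)) * |phi n (dist x i) - phi n (dist y i)|
        ≤ 1 * |phi n (dist x i) - phi n (dist y i)| :=
          mul_le_mul_of_nonneg_right (hc1 _).le (abs_nonneg _)
      _ = |phi n (dist x i) - phi n (dist y i)| := one_mul _
      _ ≤ 4 / rr n * |dist x i - dist y i| := phi_lip n _ _
      _ ≤ 4 / rr n * dist x y := by
        exact mul_le_mul_of_nonneg_left (abs_dist_sub_le _ _ _)
          (div_nonneg (by norm_num) (rr_pos n).le)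

omit hc0 hc1 in
lemma bddg (p n : ℕ) (x : M) : BddAbove (Set.range fun w : ctr (M := M) p n => phi n (dist x w)) :=
  ⟨1, by rintro _ ⟨i, rfl⟩; exact phi_le_one _ _⟩

omit hc0 in
lemma bddf (p n : ℕ) (x : M) :
    BddAbove (Set.range fun w : ctr (M := M) p n => c (idx p (w : M)) * phi n (dist x w)) :=
  ⟨1, by rintro _ ⟨i, rfl⟩; exact mul_le_one₀ (hc1 _).le (phi_nonneg _ _) (phi_le_one _ _)⟩

/-- value at a covered point -/
lemma valA {p n : ℕ} {z x : M} (hz : z ∈ ctr p n) (hx : dist x z < rr n) :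
    gfun (M := M) p n x = 1 ∧ ffun (M := M) c p n x = c (idx p z) := by
  haveI : Nonempty (ctr (M := M) p n) := ⟨⟨z, hz⟩⟩
  constructor
  · refine le_antisymm (ciSup_le fun w => phi_le_one _ _) ?_
    exact le_ciSup_of_le (bddg p n x) ⟨z, hz⟩ (phi_one hx.le).ge
  · refine le_antisymm (ciSup_le ?_) ?_
    · rintro ⟨w, hw⟩
      by_cases he : idx p w = idx p z
      · simp only [he]
        exact mul_le_of_le_one_right (hc0 _).le (phi_le_one _ _)
      · have h3 : 3 * rr n ≤ dist w z := sep hw hz he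
        have h4 : 5/4 * rr n ≤ dist x w := by
          have := dist_triangle w x z
          have hr := rr_pos n
          rw [dist_comm w x] at this
          nlinarith
        rw [phi_zero h4, mul_zero]
        exact (hc0 _).le
    · refine le_ciSup_of_le (bddf c hc1 p n x) ⟨z, hz⟩ ?_
      rw [phi_one hx.le, mul_one]

/-- analysis of the values at an arbitrary point where `gfun = 1` -/
lemma valB {p n : ℕ} {y : M} (hg : gfun (M := M) p n y = 1) :
    ∃ w, ∃ _ : w ∈ ctr p n, dist y w < 9/8 * rr n ∧ ffun (M := M) c p n y = c (idx p w) := by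
  cases isEmpty_or_nonempty (ctr (M := M) p n) with
  | inl h =>
    exfalso
    rw [gfun, Real.iSup_of_isEmpty] at hg
    norm_num at hg
  | inr hne =>
    obtain ⟨⟨w₀, hw₀⟩, hφ₀⟩ : ∃ w : ctr (M := M) p n, 1/2 < phi n (dist y w) := by
      by_contra hcon; push_neg at hcon
      have : gfun (M := M) p n y ≤ 1/2 := ciSup_le hcon
      rw [hg] at this; norm_num at this
    refine ⟨w₀, hw₀, phi_big hφ₀, ?_⟩
    have same : ∀ w : ctr (M := M) p n, 0 < phi n (dist y w) → idx p (w : M) = idx p w₀ := by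
      rintro ⟨w, hw⟩ hpos
      by_contra hne2
      have h3 : 3 * rr n ≤ dist w w₀ := sep hw hw₀ hne2
      have h1 : dist y w < 5/4 * rr n := phi_pos hpos
      have h2 : dist y w₀ < 9/8 * rr n := phi_big hφ₀
      have htri := dist_triangle w y w₀
      rw [dist_comm w y] at htri
      nlinarith [rr_pos n]
    refine le_antisymm (ciSup_le ?_) ?_
    · rintro ⟨w, hw⟩
      by_cases hpos : 0 < phi n (dist y w)
      · rw [same ⟨w, hw⟩ hpos]
        exact mul_le_of_le_one_right (hc0 _).le (phi_le_one _ _)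
      · have : phi n (dist y w) = 0 := le_antisymm (not_lt.1 hpos) (phi_nonneg _ _)
        rw [this, mul_zero]
        exact (hc0 _).le
    · by_contra hlt; push_neg at hlt
      set j := idx p w₀ with hj
      have hcj := hc0 j
      set F := ffun (M := M) c p n y with hF
      set ε : ℝ := min (1/2) ((c j - F)/(2 * c j)) with hε
      have h8 : 0 < c j - F := sub_pos.2 hlt
      have hεpos : 0 < ε := lt_min (by norm_num) (div_pos h8 (by linarith))
      have hεle : ε ≤ 1/2 := min_le_left _ _
      obtain ⟨⟨w₁, hw₁⟩, h1⟩ : ∃ w : ctr (M := M) p n, 1 - ε < phi n (dist y w) := by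
        have : 1 - ε < gfun (M := M) p n y := by rw [hg]; linarith
        exact exists_lt_of_lt_ciSup this
      have hidx : idx p w₁ = j := same ⟨w₁, hw₁⟩ (by linarith)
      have hterm : c j * phi n (dist y w₁) ≤ F := by
        have := le_ciSup (bddf c hc1 p n y) (⟨w₁, hw₁⟩ : ctr (M := M) p n)
        rw [hidx] at this
        exact this
      have h6 : c j * (1 - ε) ≤ c j * phi n (dist y w₁) :=
        mul_le_mul_of_nonneg_left h1.le hcj.le
      have h7 : ε ≤ (c j - F)/(2 * c j) := min_le_right _ _
      have h9 : c j * ε ≤ c j * ((c j - F)/(2*c j)) := mul_le_mul_of_nonneg_left h7 hcj.le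
      have h10 : c j * ((c j - F)/(2*c j)) = (c j - F)/2 := by field_simp
      have h11 : c j * (1 - ε) = c j - c j * ε := by ring
      linarith [le_trans h6 hterm]
end

/-- **Crux**: every metric space of cardinality at most the continuum admits a continuous
injection into a countable product of lines. -/
theorem crux (h : #M ≤ Cardinal.continuum) :
    ∃ F : M → (ℕ × ℕ × Bool) → ℝ, Continuous F ∧ Function.Injective F := by
  have hle : #M ≤ #(ULift.{u} ℝ) := by
    rw [Cardinal.mk_uLift, Cardinal.mk_real, Cardinal.lift_continuum]; exact h
  obtain ⟨e⟩ := (Cardinal.le_def _ _).1 hle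
  have hπ := Real.pi_pos
  set c : M → ℝ := fun i => 1/2 + Real.arctan (e i).down / Real.pi with hcdef
  have hb : ∀ t : ℝ, -(1/2:ℝ) < Real.arctan t / Real.pi ∧ Real.arctan t / Real.pi < 1/2 := by
    intro t
    have h1 := Real.neg_pi_div_two_lt_arctan t
    have h2 := Real.arctan_lt_pi_div_two t
    constructor
    · rw [show -(1/2:ℝ) = (-(Real.pi/2))/Real.pi by field_simp]
      gcongr
    · rw [show (1/2:ℝ) = (Real.pi/2)/Real.pi by field_simp]
      gcongr
  have hc0 : ∀ i, 0 < c i := fun i => by have := (hb (e i).down).1; simp only [hcdef]; linarith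
  have hc1 : ∀ i, c i < 1 := fun i => by have := (hb (e i).down).2; simp only [hcdef]; linarith
  have hcinj : Function.Injective c := by
    intro i j hij
    simp only [hcdef] at hij
    have : Real.arctan (e i).down = Real.arctan (e j).down := by
      field_simp at hij
      linarith
    have h2 : (e i).down = (e j).down := Real.arctan_injective this
    exact e.injective (ULift.ext _ _ h2)
  refine ⟨fun x k => cond k.2.2 (ffun c k.1 k.2.1 x) (gfun k.1 k.2.1 x), ?_, ?_⟩
  · apply continuous_pi
    rintro ⟨p, n, b⟩
    cases b
    · simpa using gfun_cont p n
    · simpa using ffun_cont c hc0 hc1 p n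
  · intro x y hxy
    by_contra hne
    obtain ⟨p, hp⟩ := rr_lt (div_pos (dist_pos.2 hne) (by norm_num : (0:ℝ) < 3))
    obtain ⟨n, z, hz, hxz⟩ := cover p x
    obtain ⟨hgx, hfx⟩ := valA c hc0 hc1 hz hxz
    have hgy : gfun p n y = 1 := by
      have h1 : gfun p n x = gfun p n y := congrFun hxy (p, n, false)
      rw [← h1, hgx]
    have hfy : ffun c p n y = c (idx p z) := by
      have h1 : ffun c p n x = ffun c p n y := congrFun hxy (p, n, true)
      rw [← h1, hfx]
    obtain ⟨w, hw, hyw, hfw⟩ := valB c hc0 hc1 hgy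
    have hidx : idx p w = idx p z := hcinj (by rw [← hfw, hfy])
    have hrn := rr_pos n
    have hzi : dist z (idx p z) < rr p := (mem_ctr.1 hz).2.1 z (by rw [dist_self]; linarith)
    have hwi : dist w (idx p w) < rr p := (mem_ctr.1 hw).2.1 w (by rw [dist_self]; linarith)
    have h3n : 3 * rr n ≤ rr p := (mem_ctr.1 hz).1
    have hwi' : dist (idx p z) w < rr p := by rw [← hidx, dist_comm]; exact hwi
    have t1 : dist x y ≤ dist x z + dist z (idx p z) + dist (idx p z) w + dist w y := by
      calc dist x y ≤ dist x w + dist w y := dist_triangle _ _ _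
        _ ≤ (dist x (idx p z) + dist (idx p z) w) + dist w y := by
            linarith [dist_triangle x (idx p z) w]
        _ ≤ dist x z + dist z (idx p z) + dist (idx p z) w + dist w y := by
            linarith [dist_triangle x z (idx p z)]
    rw [dist_comm w y] at t1
    linarith



abbrev K : Type := ℕ × ℕ × Bool

/-- rational ramp function -/
def ramp (a b : ℚ) (t : ℝ) : ℝ := max 0 (min 1 (((b:ℝ) - t) / ((b:ℝ) - (a:ℝ))))

lemma ramp_cont (a b : ℚ) : Continuous (ramp a b) := by
  apply Continuous.max continuous_const
  apply Continuous.min continuous_const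
  exact (continuous_const.sub continuous_id).div_const _

lemma ramp_one {a b : ℚ} {t : ℝ} (hab : (a:ℝ) < b) (h : t ≤ a) : ramp a b t = 1 := by
  have h1 : (1:ℝ) ≤ ((b:ℝ) - t) / ((b:ℝ) - (a:ℝ)) := by
    rw [le_div_iff₀ (by linarith)]; linarith
  rw [ramp, min_eq_left h1, max_eq_right (by norm_num)]

lemma ramp_zero {a b : ℚ} {t : ℝ} (hab : (a:ℝ) < b) (h : (b:ℝ) ≤ t) : ramp a b t = 0 := by
  have h1 : ((b:ℝ) - t) / ((b:ℝ) - (a:ℝ)) ≤ 0 :=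
    div_nonpos_iff.2 (Or.inr ⟨by linarith, by linarith⟩)
  rw [ramp, max_eq_left (le_trans (min_le_right _ _) h1)]

lemma ramp_one' {a b : ℚ} {t : ℝ} (hab : (b:ℝ) < a) (h : (a:ℝ) ≤ t) : ramp a b t = 1 := by
  have h1 : (1:ℝ) ≤ ((b:ℝ) - t) / ((b:ℝ) - (a:ℝ)) := by
    rw [le_div_iff_of_neg (by linarith : (b:ℝ) - (a:ℝ) < 0)]
    linarith
  rw [ramp, min_eq_left h1, max_eq_right (by norm_num)]

lemma ramp_zero' {a b : ℚ} {t : ℝ} (hab : (b:ℝ) < a) (h : t ≤ b) : ramp a b t = 0 := by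
  have h1 : ((b:ℝ) - t) / ((b:ℝ) - (a:ℝ)) ≤ 0 :=
    div_nonpos_iff.2 (Or.inl ⟨by linarith, by linarith⟩)
  rw [ramp, max_eq_left (le_trans (min_le_right _ _) h1)]

lemma exists_ramp {s t : ℝ} (h : s ≠ t) :
    ∃ ab : ℚ × ℚ, ramp ab.1 ab.2 s = 1 ∧ ramp ab.1 ab.2 t = 0 := by
  rcases h.lt_or_gt with hlt | hlt
  · obtain ⟨a, ha1, ha2⟩ := exists_rat_btwn hlt
    obtain ⟨b, hb1, hb2⟩ := exists_rat_btwn ha2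
    have hab : (a:ℝ) < b := by exact_mod_cast hb1
    exact ⟨(a, b), ramp_one hab ha1.le, ramp_zero hab hb2.le⟩
  · obtain ⟨b, hb1, hb2⟩ := exists_rat_btwn hlt
    obtain ⟨a, ha1, ha2⟩ := exists_rat_btwn hb2
    have hab : (b:ℝ) < a := by exact_mod_cast ha1
    exact ⟨(a, b), ramp_one' hab ha2.le, ramp_zero' hab hb1.le⟩

/-- parameter space for the countable interpolation family -/
def Gam : Type := Σ m : ℕ, (Fin m → ℚ) × (Fin m → List (K × ℚ × ℚ))

instance : Countable Gam := by unfold Gam; infer_instance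

/-- the interpolation family -/
def Phi (γ : Gam) (v : K → ℝ) : ℝ :=
  ∑ a : Fin γ.1, (γ.2.1 a : ℝ) * ((γ.2.2 a).map fun e => ramp e.2.1 e.2.2 (v e.1)).prod

lemma Phi_cont (γ : Gam) : Continuous (Phi γ) := by
  apply continuous_finset_sum
  intro a _
  apply Continuous.mul continuous_const
  generalize γ.2.2 a = L
  induction L with
  | nil => simpa using continuous_const
  | cons e L ih =>
    simp only [List.map_cons, List.prod_cons]
    exact ((ramp_cont _ _).comp (continuous_apply e.1)).mul ih

lemma interp {m : ℕ} (v : Fin m → K → ℝ) (hv : Function.Injective v)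
    (r : Fin m → ℝ) {ε : ℝ} (hε : 0 < ε) :
    ∃ γ : Gam, ∀ a, |Phi γ (v a) - r a| < ε := by
  classical
  have hsep : ∀ a b : Fin m, a ≠ b → ∃ k : K, v a k ≠ v b k := by
    intro a b hab
    by_contra hcon; push_neg at hcon
    exact hab (hv (funext hcon))
  choose kk hkk using hsep
  have hr2 : ∀ a b, ∀ h : a ≠ b, ∃ ab : ℚ × ℚ,
      ramp ab.1 ab.2 (v a (kk a b h)) = 1 ∧ ramp ab.1 ab.2 (v b (kk a b h)) = 0 :=
    fun a b h => exists_ramp (hkk a b h)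
  choose qq hq1 hq0 using hr2
  choose s hs using fun a => exists_rat_near (K := ℝ) (r a) hε
  classical
  set L : Fin m → List (K × ℚ × ℚ) := fun a => (Finset.univ.erase a).toList.attach.map fun b =>
    ((kk a b.1 (fun hh => (Finset.mem_erase.1 (Finset.mem_toList.1 b.2)).1 hh.symm),
      qq a b.1 (fun hh => (Finset.mem_erase.1 (Finset.mem_toList.1 b.2)).1 hh.symm))) with hL
  refine ⟨⟨m, s, L⟩, ?_⟩
  intro a
  have hval : Phi ⟨m, s, L⟩ (v a) = s a := by
    have heq : Phi ⟨m, s, L⟩ (v a) =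
        ∑ a' : Fin m, (s a' : ℝ) * ((L a').map fun e => ramp e.2.1 e.2.2 (v a e.1)).prod := rfl
    rw [heq, Finset.sum_eq_single a]
    · have hone : ((L a).map fun e => ramp e.2.1 e.2.2 (v a e.1)).prod = 1 := by
        apply List.prod_eq_one
        intro x hx
        rw [hL, List.map_map] at hx
        obtain ⟨b, _, rfl⟩ := List.mem_map.1 hx
        simp only [Function.comp_apply]
        exact hq1 a b.1 _
      rw [hone, mul_one]
    · intro a' _ hne
      have hzero : ((L a').map fun e => ramp e.2.1 e.2.2 (v a e.1)).prod = 0 := by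
        apply List.prod_eq_zero
        rw [hL, List.map_map]
        have hmem : a ∈ (Finset.univ.erase a').toList :=
          Finset.mem_toList.2 (Finset.mem_erase.2 ⟨hne.symm, Finset.mem_univ a⟩)
        refine List.mem_map.2 ⟨⟨a, hmem⟩, List.mem_attach _ _, ?_⟩
        simp only [Function.comp_apply]
        exact hq0 a' a _
      rw [hzero, mul_zero]
    · exact fun h => absurd (Finset.mem_univ a) h
  rw [hval, abs_sub_comm]
  exact hs a


/-- (iii) → (i): a continuous injection into `ℝ^(ℕ×ℕ×Bool)` makes `C_p(X)` separable. -/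
lemma separable_of_inj {X : Type u} [TopologicalSpace X] {ι : X → K → ℝ}
    (hcι : Continuous ι) (hiι : Function.Injective ι) :
    SeparableSpace {f : X → ℝ // Continuous f} := by
  classical
  refine ⟨⟨Set.range (fun γ : Gam => (⟨fun x => Phi γ (ι x), (Phi_cont γ).comp hcι⟩ :
    {f : X → ℝ // Continuous f})), countable_range _, ?_⟩⟩
  intro f
  rw [mem_closure_iff_nhds]
  intro U hU
  rw [nhds_induced, Filter.mem_comap] at hU
  obtain ⟨V, hV, hVU⟩ := hU
  rw [nhds_pi, Filter.mem_pi] at hV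
  obtain ⟨I, hIfin, t, ht, htV⟩ := hV
  have hδ : ∀ x, ∃ δ, 0 < δ ∧ Metric.ball (f.val x) δ ⊆ t x := by
    intro x
    obtain ⟨δ, hδ1, hδ2⟩ := Metric.mem_nhds_iff.1 (ht x)
    exact ⟨δ, hδ1, hδ2⟩
  choose δ hδpos hδball using hδ
  set s := hIfin.toFinset with hs
  obtain ⟨ε, hεpos, hεle⟩ : ∃ ε, 0 < ε ∧ ∀ x ∈ I, ε ≤ δ x := by
    refine ⟨(insert (1:ℝ) (s.image δ)).min' (Finset.insert_nonempty _ _), ?_, ?_⟩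
    · rw [Finset.lt_min'_iff]
      intro b hb
      rcases Finset.mem_insert.1 hb with rfl | hb
      · norm_num
      · obtain ⟨x, _, rfl⟩ := Finset.mem_image.1 hb
        exact hδpos x
    · intro x hx
      apply Finset.min'_le
      exact Finset.mem_insert_of_mem (Finset.mem_image.2 ⟨x, by rwa [hs, Set.Finite.mem_toFinset], rfl⟩)
  set l := s.toList with hl
  have hnodup : l.Nodup := Finset.nodup_toList s
  have hgetinj : Function.Injective l.get := List.nodup_iff_injective_get.1 hnodup
  set v : Fin l.length → K → ℝ := fun a => ι (l.get a) with hv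
  have hvinj : Function.Injective v := fun a b hab => hgetinj (hiι hab)
  obtain ⟨γ, hγ⟩ := interp v hvinj (fun a => f.val (l.get a)) hεpos
  refine ⟨⟨fun x => Phi γ (ι x), (Phi_cont γ).comp hcι⟩, ?_, ⟨γ, rfl⟩⟩
  apply hVU
  show (fun x => Phi γ (ι x)) ∈ V
  apply htV
  intro x hxI
  have hxl : x ∈ l := by
    rw [hl, Finset.mem_toList, hs, Set.Finite.mem_toFinset]
    exact hxI
  obtain ⟨a, ha⟩ := List.mem_iff_get.1 hxl
  have h2 : |Phi γ (ι (l.get a)) - f.val (l.get a)| < ε := hγ a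
  rw [ha] at h2
  show Phi γ (ι x) ∈ t x
  apply hδball x
  rw [Metric.mem_ball, Real.dist_eq]
  exact lt_of_lt_of_le h2 (hεle x hxI)

/-- (i) → (ii) -/
lemma cond_of_sep {X : Type u} [TopologicalSpace X] [CompletelyRegularSpace X] [T2Space X]
    (h : SeparableSpace {f : X → ℝ // Continuous f}) :
    ∃ (Y : Type u) (_ : TopologicalSpace Y) (_ : MetrizableSpace Y) (_ : SeparableSpace Y),
      ∃ f : X → Y, Continuous f ∧ Function.Bijective f := by
  classical
  haveI := h
  obtain ⟨S, hSc, hSd⟩ := exists_countable_dense {f : X → ℝ // Continuous f}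
  haveI : Countable S := hSc.to_subtype
  let F : X → (S → ℝ) := fun x g => (g : {f : X → ℝ // Continuous f}).val x
  have hFc : Continuous F := continuous_pi fun g => (g : {f : X → ℝ // Continuous f}).2
  have hFi : Function.Injective F := by
    intro x y hxy0
    by_contra hne
    obtain ⟨f₀, hf₀c, hf₀x, hf₀y⟩ :=
      CompletelyRegularSpace.completely_regular x {y} isClosed_singleton (by simpa using hne)
    set g₀ : {f : X → ℝ // Continuous f} :=
      ⟨fun z => ((f₀ z : ℝ)), continuous_subtype_val.comp hf₀c⟩ with hg₀
    have hx0 : ((f₀ x : ℝ)) = 0 := by rw [hf₀x]; rfl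
    have hy1 : ((f₀ y : ℝ)) = 1 := by
      have h5 : f₀ y = 1 := hf₀y (Set.mem_singleton y)
      rw [h5]; rfl
    set U : Set {f : X → ℝ // Continuous f} := {g | g.val x ≠ g.val y} with hUdef
    have hUo : IsOpen U := by
      have hUeq : U = (fun g : {f : X → ℝ // Continuous f} => g.val x - g.val y) ⁻¹' ({0}ᶜ) := by
        ext g; simp [hUdef, sub_eq_zero]
      rw [hUeq]
      exact (((continuous_apply x).comp continuous_subtype_val).sub
        ((continuous_apply y).comp continuous_subtype_val)).isOpen_preimage _
          isOpen_compl_singleton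
    have hUne : U.Nonempty := ⟨g₀, by
      simp only [hUdef, Set.mem_setOf_eq, hg₀]
      rw [hx0, hy1]; norm_num⟩
    obtain ⟨g, hgU, hgS⟩ := hSd.inter_open_nonempty U hUo hUne
    exact hgU (congrFun hxy0 ⟨g, hgS⟩)
  exact ⟨Set.range F, inferInstance, inferInstance, inferInstance,
    Set.rangeFactorization F, hFc.subtype_mk _,
    fun a b hab => hFi (congrArg Subtype.val hab), Set.rangeFactorization_surjective⟩

/-- (ii) → (iii) -/
lemma three_of_two {X : Type u} [TopologicalSpace X]
    (h : ∃ (Y : Type u) (_ : TopologicalSpace Y) (_ : MetrizableSpace Y) (_ : SeparableSpace Y),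
      ∃ f : X → Y, Continuous f ∧ Function.Bijective f) :
    (∃ (Y : Type u) (_ : TopologicalSpace Y) (_ : MetrizableSpace Y),
      ∃ f : X → Y, Continuous f ∧ Function.Injective f) ∧ #X ≤ Cardinal.continuum := by
  obtain ⟨Y, tY, hmY, hsY, f, hfc, hfb⟩ := h
  refine ⟨⟨Y, tY, hmY, f, hfc, hfb.injective⟩, ?_⟩
  rw [Cardinal.mk_congr (Equiv.ofBijective f hfb)]
  letI : MetricSpace Y := TopologicalSpace.metrizableSpaceMetric Y
  obtain ⟨s, hsc, hsd⟩ := exists_countable_dense Y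
  obtain ⟨enc, henc⟩ := Set.countable_iff_exists_injective.1 hsc
  have hseq : ∀ y : Y, ∃ uu : ℕ → Y, (∀ n, uu n ∈ s) ∧ Tendsto uu atTop (𝓝 y) :=
    fun y => mem_closure_iff_seq_limit.1 (hsd y)
  choose uu hu1 hu2 using hseq
  have hGi : Function.Injective (fun y : Y => ULift.up.{u} fun n => enc ⟨uu y n, hu1 y n⟩) := by
    intro y1 y2 h12
    have h13 : ∀ n, enc ⟨uu y1 n, hu1 y1 n⟩ = enc ⟨uu y2 n, hu1 y2 n⟩ := fun n =>
      congrFun (congrArg ULift.down h12) n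
    have h14 : uu y1 = uu y2 := funext fun n => congrArg Subtype.val (henc (h13 n))
    exact tendsto_nhds_unique (hu2 y1) (h14 ▸ hu2 y2)
  calc #Y ≤ #(ULift.{u} (ℕ → ℕ)) := Cardinal.mk_le_of_injective hGi
    _ = Cardinal.continuum := by
      rw [Cardinal.mk_uLift, ← Cardinal.power_def, Cardinal.mk_nat,
        Cardinal.aleph0_power_aleph0, Cardinal.lift_continuum]

/-- (iii) → (i) -/
lemma one_of_three {X : Type u} [TopologicalSpace X]
    (h : (∃ (Y : Type u) (_ : TopologicalSpace Y) (_ : MetrizableSpace Y),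
      ∃ f : X → Y, Continuous f ∧ Function.Injective f) ∧ #X ≤ Cardinal.continuum) :
    SeparableSpace {f : X → ℝ // Continuous f} := by
  obtain ⟨⟨Y, tY, hmY, f, hfc, hfi⟩, hcard⟩ := h
  letI : MetricSpace Y := TopologicalSpace.metrizableSpaceMetric Y
  have hm : #(Set.range f) ≤ Cardinal.continuum := by
    rw [Cardinal.mk_range_eq f hfi]; exact hcard
  obtain ⟨F, hFc, hFi⟩ := crux (M := Set.range f) hm
  refine separable_of_inj (ι := fun x => F (Set.rangeFactorization f x)) ?_ ?_
  · exact hFc.comp (hfc.subtype_mk _)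
  · intro a b hab
    exact hfi (congrArg Subtype.val (hFi hab))

end

end CpSepAux


theorem Cp_separable_tfae (X : Type u) [TopologicalSpace X] [CompletelyRegularSpace X]
    [T2Space X] :
    List.TFAE
      [ -- (i) `C_p(X)` is separable
        SeparableSpace {f : X → ℝ // Continuous f},
        -- (ii) `X` condenses onto a separable metrizable space
        ∃ (Y : Type u) (_ : TopologicalSpace Y) (_ : MetrizableSpace Y) (_ : SeparableSpace Y),
          ∃ f : X → Y, Continuous f ∧ Function.Bijective f,
        -- (iii) `X` is submetrizable and has cardinality at most the continuum
        (∃ (Y : Type u) (_ : TopologicalSpace Y) (_ : MetrizableSpace Y),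
          ∃ f : X → Y, Continuous f ∧ Function.Injective f) ∧ #X ≤ Cardinal.continuum ] := by
  tfae_have 1 → 2 := CpSepAux.cond_of_sep
  tfae_have 2 → 3 := CpSepAux.three_of_two
  tfae_have 3 → 1 := CpSepAux.one_of_three
  tfae_finish
end

section
/- Let X be a Tychonoff (completely regular Hausdorff) space such that C_p(X) is separable. Then the following are equivalent: (i) C_p(X) is strongly sequentially separable; (ii) every countable subset of C_p(X), with the subspace topology, is Fréchet–Urysohn. -/
open Set Filter Topology TopologicalSpace

/-- A space is strongly sequentially separable if it is separable and every countable dense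
subset is sequentially dense. -/
def StronglySeqSeparable (Y : Type*) [TopologicalSpace Y] : Prop :=
  SeparableSpace Y ∧
    ∀ D : Set Y, D.Countable → Dense D →
      ∀ y : Y, ∃ u : ℕ → Y, (∀ n, u n ∈ D) ∧ Tendsto u atTop (nhds y)

namespace CpSSSAux

abbrev CpS (X : Type*) [TopologicalSpace X] := {f : X → ℝ // Continuous f}

variable {X : Type*} [TopologicalSpace X] [CompletelyRegularSpace X] [T2Space X]

/-- One step of the splitting construction. -/
lemma step_exists (S : Set X) (hS : S.Infinite) :
    ∃ (v : X → ℝ) (w : X) (S' : Set X),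
      Continuous v ∧ (∀ z, 0 ≤ v z) ∧ (∀ z, v z ≤ 1) ∧ v w = 1 ∧ w ∈ S ∧
        S' ⊆ S ∧ S'.Infinite ∧ ∀ z ∈ S', v z = 0 := by
  obtain ⟨x, hx, y, hy, hxy⟩ := hS.nontrivial
  obtain ⟨q, hqc, hqx, hqy⟩ := CompletelyRegularSpace.completely_regular x {y}
      isClosed_singleton (by simpa using hxy)
  set p : X → ℝ := fun z => (q z : ℝ) with hp
  have hpc : Continuous p := hqc.subtype_val
  have hp0 : ∀ z, 0 ≤ p z := fun z => (q z).2.1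
  have hp1 : ∀ z, p z ≤ 1 := fun z => (q z).2.2
  have hpx : p x = 0 := by simp only [hp, hqx]; rfl
  have hpy : p y = 1 := by
    have h1 := hqy (mem_singleton y)
    simp only [hp, h1]; rfl
  have hsplit : S = (S ∩ {z | p z ≤ 1/2}) ∪ (S ∩ {z | p z ≤ 1/2}ᶜ) :=
    (Set.inter_union_compl S {z | p z ≤ 1/2}).symm
  rcases Set.infinite_union.mp (hsplit ▸ hS) with hinf | hinf
  · refine ⟨fun z => max 0 (2 * p z - 1), y, S ∩ {z | p z ≤ 1/2}, ?_, ?_, ?_, ?_, hy,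
      inter_subset_left, hinf, ?_⟩
    · exact continuous_const.max ((continuous_const.mul hpc).sub continuous_const)
    · intro z; exact le_max_left _ _
    · intro z; exact max_le (by norm_num) (by have := hp1 z; linarith)
    · show max 0 (2 * p y - 1) = 1
      rw [hpy]; norm_num
    · rintro z ⟨-, hz⟩
      show max 0 (2 * p z - 1) = 0
      have hz' : p z ≤ 1/2 := hz
      have : 2 * p z - 1 ≤ 0 := by linarith
      exact max_eq_left this
  · refine ⟨fun z => max 0 (1 - 2 * p z), x, S ∩ {z | ¬ p z ≤ 1/2}, ?_, ?_, ?_, ?_, hx,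
      inter_subset_left, hinf, ?_⟩
    · exact continuous_const.max (continuous_const.sub (continuous_const.mul hpc))
    · intro z; exact le_max_left _ _
    · intro z; exact max_le (by norm_num) (by have := hp0 z; linarith)
    · show max 0 (1 - 2 * p x) = 1
      rw [hpx]; norm_num
    · rintro z ⟨-, hz⟩
      show max 0 (1 - 2 * p z) = 0
      have hz' : (1:ℝ)/2 < p z := not_le.mp hz
      have : 1 - 2 * p z ≤ 0 := by linarith
      exact max_eq_left this

set_option maxHeartbeats 1000000 in
/-- Every infinite completely regular Hausdorff space carries a continuous real-valued
function with infinite range. -/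
lemma exists_infinite_range (X : Type*) [TopologicalSpace X] [CompletelyRegularSpace X]
    [T2Space X] [Infinite X] :
    ∃ u : X → ℝ, Continuous u ∧ (Set.range u).Infinite := by
  classical
  choose v w S' hc h0 h1 hw1 hwS hsub hinf hz using step_exists (X := X)
  let chain : ℕ → {S : Set X // S.Infinite} := fun n =>
    Nat.rec ⟨Set.univ, Set.infinite_univ⟩ (fun _ p => ⟨S' p.1 p.2, hinf p.1 p.2⟩) n
  have chain_succ : ∀ n, (chain (n+1)).1 = S' (chain n).1 (chain n).2 := fun n => rfl
  set V : ℕ → X → ℝ := fun n => v (chain n).1 (chain n).2 with hV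
  set W : ℕ → X := fun n => w (chain n).1 (chain n).2 with hW
  have chain_mono : ∀ {m n : ℕ}, m ≤ n → (chain n).1 ⊆ (chain m).1 := by
    intro m n h
    induction h with
    | refl => exact subset_rfl
    | step h ih =>
        exact (by rw [chain_succ]; exact hsub _ _ : (chain (_+1)).1 ⊆ _).trans ih
  have hWmem : ∀ n, W n ∈ (chain n).1 := fun n => hwS _ _
  have hVzero : ∀ {j n : ℕ}, j < n → V j (W n) = 0 := by
    intro j n hjn
    have : W n ∈ (chain (j+1)).1 := chain_mono hjn (hWmem n)
    rw [chain_succ] at this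
    exact hz _ _ _ this
  have hV0 : ∀ m z, 0 ≤ V m z := fun m z => h0 _ _ z
  have hV1 : ∀ m z, V m z ≤ 1 := fun m z => h1 _ _ z
  have hVW : ∀ m, V m (W m) = 1 := fun m => hw1 _ _
  set c : ℕ → ℝ := fun m => (1/4 : ℝ)^(m+1) with hcdef
  have hc0 : ∀ m, 0 < c m := fun m => by positivity
  have hcsum : Summable c := by
    have h := summable_geometric_of_lt_one (r := (1/4 : ℝ)) (by norm_num) (by norm_num)
    simpa [hcdef, pow_succ] using h.mul_right (1/4 : ℝ)
  set g : X → ℝ := fun x => ∑' m, c m * V m x with hg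
  have hterm_cont : ∀ m, Continuous (fun x => c m * V m x) :=
    fun m => continuous_const.mul (hc _ _)
  have hbound : ∀ m x, ‖c m * V m x‖ ≤ c m := by
    intro m x
    rw [Real.norm_eq_abs, abs_mul, abs_of_nonneg (le_of_lt (hc0 m)),
      abs_of_nonneg (hV0 m x)]
    nlinarith [hV1 m x, hV0 m x, hc0 m]
  have hgc : Continuous g := continuous_tsum hterm_cont hcsum hbound
  have hsx : ∀ x, Summable (fun m => c m * V m x) := by
    intro x
    refine hcsum.of_nonneg_of_le (fun m => ?_) (fun m => ?_)
    · exact mul_nonneg (le_of_lt (hc0 m)) (hV0 m x)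
    · nlinarith [hV1 m x, hV0 m x, hc0 m]
  have hlow : ∀ n, c n ≤ g (W n) := by
    intro n
    have := Summable.le_tsum (hsx (W n)) n
        (fun j _ => mul_nonneg (le_of_lt (hc0 j)) (hV0 j (W n)))
    rwa [hVW n, mul_one] at this
  have htail : ∀ n, (∑' i, c (i + (n+1))) = (1/3) * c n := by
    intro n
    have hre : ∀ i : ℕ, c (i + (n+1)) = (1/4:ℝ)^i * ((1/4:ℝ)^(n+2)) := by
      intro i
      rw [hcdef]
      rw [← pow_add]
      ring_nf
    calc (∑' i, c (i + (n+1))) = ∑' i, (1/4:ℝ)^i * ((1/4:ℝ)^(n+2)) := by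
          exact tsum_congr hre
      _ = (∑' i, (1/4:ℝ)^i) * ((1/4:ℝ)^(n+2)) := tsum_mul_right
      _ = (1 - 1/4)⁻¹ * ((1/4:ℝ)^(n+2)) := by
          rw [tsum_geometric_of_lt_one (by norm_num) (by norm_num)]
      _ = (1/3) * c n := by
          rw [hcdef]
          ring
  have hhigh : ∀ n, g (W n) ≤ c n + (1/3) * c n := by
    intro n
    have hsplit := Summable.sum_add_tsum_nat_add (f := fun m => c m * V m (W n)) (n+1) (hsx (W n))
    have hfin : (∑ i ∈ Finset.range (n+1), c i * V i (W n)) = c n := by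
      rw [Finset.sum_eq_single n]
      · rw [hVW n, mul_one]
      · intro i hi hne
        have hilt : i < n := lt_of_le_of_ne (Nat.lt_succ_iff.mp (Finset.mem_range.mp hi)) hne
        rw [hVzero hilt, mul_zero]
      · intro h; exact absurd (Finset.self_mem_range_succ n) h
    have htails : Summable (fun i => c (i + (n+1)) * V (i + (n+1)) (W n)) := by
      have := hsx (W n)
      exact (summable_nat_add_iff (n+1)).mpr this
    have htailb : (∑' i, c (i + (n+1)) * V (i + (n+1)) (W n)) ≤ ∑' i, c (i + (n+1)) := by
      refine Summable.tsum_le_tsum (fun i => ?_) htails ((summable_nat_add_iff (n+1)).mpr hcsum)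
      nlinarith [hV1 (i + (n+1)) (W n), hV0 (i + (n+1)) (W n), hc0 (i + (n+1))]
    calc g (W n) = (∑ i ∈ Finset.range (n+1), c i * V i (W n))
          + ∑' i, c (i + (n+1)) * V (i + (n+1)) (W n) := hsplit.symm
      _ ≤ c n + ∑' i, c (i + (n+1)) := by rw [hfin]; exact add_le_add_right htailb _
      _ = c n + (1/3) * c n := by rw [htail n]
  have hanti : ∀ {m n : ℕ}, m < n → g (W n) < g (W m) := by
    intro m n hmn
    have h1 : g (W n) ≤ c n + (1/3) * c n := hhigh n
    have h2 : c m ≤ g (W m) := hlow m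
    have h3 : c n ≤ c (m+1) := by
      rw [hcdef]
      exact pow_le_pow_of_le_one (by norm_num) (by norm_num) (by omega)
    have h4 : c (m+1) = (1/4) * c m := by rw [hcdef]; ring
    nlinarith [hc0 m, hc0 n]
  have hinj : Function.Injective (fun n => g (W n)) := by
    intro a b hab
    by_contra hne
    rcases Nat.lt_or_ge a b with h | h
    · exact ne_of_gt (hanti h) hab
    · have hba : b < a := lt_of_le_of_ne h (Ne.symm hne)
      exact ne_of_lt (hanti hba) hab
  exact ⟨g, hgc, Set.infinite_of_injective_forall_mem hinj (fun n => Set.mem_range_self _)⟩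

/-- One step of picking separated points in an infinite set of reals. -/
lemma sep_step (T' : Set ℝ) (cap : ℝ) (hT' : T'.Infinite) (hcap : 0 < cap) :
    ∃ (a d : ℝ) (T'' : Set ℝ), a ∈ T' ∧ 0 < d ∧ d ≤ cap ∧ T'' ⊆ T' ∧ T''.Infinite ∧
      ∀ s ∈ T'', 2 * d ≤ |s - a| := by
  obtain ⟨x, hx, y, hy, hxy⟩ := hT'.nontrivial
  set cc := |x - y| with hcc
  have hc0 : 0 < cc := abs_pos.mpr (sub_ne_zero.mpr hxy)
  have hcover : T' ⊆ {s ∈ T' | cc/4 < |s - x|} ∪ {s ∈ T' | cc/4 < |s - y|} := by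
    intro s hs
    by_contra hcon
    simp only [mem_union, mem_setOf_eq, not_or, not_and, not_lt] at hcon
    have h1 : |s - x| ≤ cc/4 := hcon.1 hs
    have h2 : |s - y| ≤ cc/4 := hcon.2 hs
    have : cc ≤ |s - x| + |s - y| := by
      have := abs_sub_abs_le_abs_sub (x - s) (y - s)
      have htri := abs_sub (x - s) (y - s)
      calc cc = |(x - s) - (y - s)| := by rw [hcc]; ring_nf
        _ ≤ |x - s| + |y - s| := abs_sub _ _
        _ = |s - x| + |s - y| := by rw [abs_sub_comm x s, abs_sub_comm y s]
    linarith
  rcases Set.infinite_union.mp (hT'.mono hcover) with hinf | hinf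
  · refine ⟨x, min (cc/8) cap, {s ∈ T' | cc/4 < |s - x|}, hx, ?_, min_le_right _ _,
      fun s hs => hs.1, hinf, ?_⟩
    · exact lt_min (by linarith) hcap
    · rintro s ⟨-, hs⟩
      have : min (cc/8) cap ≤ cc/8 := min_le_left _ _
      linarith
  · refine ⟨y, min (cc/8) cap, {s ∈ T' | cc/4 < |s - y|}, hy, ?_, min_le_right _ _,
      fun s hs => hs.1, hinf, ?_⟩
    · exact lt_min (by linarith) hcap
    · rintro s ⟨-, hs⟩
      have : min (cc/8) cap ≤ cc/8 := min_le_left _ _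
      linarith

/-- From an infinite set of reals one can pick a sequence of points with separated
neighbourhoods. -/
lemma exists_sep_family {T : Set ℝ} (hT : T.Infinite) :
    ∃ (vv : ℕ → ℝ) (δ : ℕ → ℝ), (∀ m, vv m ∈ T) ∧ (∀ m, 0 < δ m) ∧
      ∀ m n, m ≠ n → δ m + δ n ≤ |vv m - vv n| := by
  classical
  choose a d T'' ha hd hdcap hsub hinf hfar using
    fun (p : {q : Set ℝ × ℝ // q.1.Infinite ∧ 0 < q.2}) => sep_step p.1.1 p.1.2 p.2.1 p.2.2
  let chain : ℕ → {q : Set ℝ × ℝ // q.1.Infinite ∧ 0 < q.2} := fun n =>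
    Nat.rec ⟨(T, 1), hT, one_pos⟩ (fun _ p => ⟨(T'' p, d p), hinf p, hd p⟩) n
  have chain_succ : ∀ n, (chain (n+1)).1.1 = T'' (chain n) := fun n => rfl
  have chain_cap : ∀ n, (chain (n+1)).1.2 = d (chain n) := fun n => rfl
  set vv : ℕ → ℝ := fun n => a (chain n) with hvv
  set δ : ℕ → ℝ := fun n => d (chain n) with hδ
  have chain_mono : ∀ {m n : ℕ}, m ≤ n → (chain n).1.1 ⊆ (chain m).1.1 := by
    intro m n h
    induction h with
    | refl => exact subset_rfl
    | step h ih =>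
        exact (by rw [chain_succ]; exact hsub _ : (chain (_+1)).1.1 ⊆ _).trans ih
  have chain_subT : ∀ n, (chain n).1.1 ⊆ T := fun n => chain_mono (Nat.zero_le n)
  have hδanti : ∀ {m n : ℕ}, m ≤ n → δ n ≤ δ m := by
    have hsucc : ∀ k, δ (k+1) ≤ δ k := by
      intro k
      have := hdcap (chain (k+1))
      rwa [chain_cap k] at this
    intro m n h
    induction h with
    | refl => exact le_rfl
    | step h ih => exact le_trans (hsucc _) ih
  have key : ∀ {m n : ℕ}, m < n → δ m + δ n ≤ |vv m - vv n| := by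
    intro m n hmn
    have hmem : vv n ∈ (chain (m+1)).1.1 := chain_mono hmn (ha (chain n))
    rw [chain_succ m] at hmem
    have h2 : 2 * δ m ≤ |vv n - vv m| := hfar (chain m) _ hmem
    have h3 : δ n ≤ δ m := hδanti (Nat.le_of_lt hmn)
    rw [abs_sub_comm]
    linarith
  refine ⟨vv, δ, fun m => chain_subT m (ha (chain m)), fun m => hd (chain m), ?_⟩
  intro m n hmn
  rcases Nat.lt_or_ge m n with h | h
  · exact key h
  · have h' : n < m := lt_of_le_of_ne h (Ne.symm hmn)
    rw [abs_sub_comm]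
    have := key h'
    linarith

set_option maxHeartbeats 1000000 in
/-- Main construction: under strong sequential separability, every point of the closure of a
countable set of continuous functions is a limit of a sequence from that set. -/
lemma core {X : Type*} [TopologicalSpace X] [CompletelyRegularSpace X] [T2Space X]
    (hssd : ∀ D : Set (CpS X), D.Countable → Dense D →
      ∀ y : CpS X, ∃ u : ℕ → CpS X, (∀ n, u n ∈ D) ∧ Tendsto u atTop (𝓝 y))
    (D₀ : Set (CpS X)) (hD₀c : D₀.Countable) (hD₀d : Dense D₀)
    (A : Set (CpS X)) (hA : A.Countable) (f : CpS X) (hf : f ∈ closure A) :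
    ∃ u : ℕ → CpS X, (∀ n, u n ∈ A) ∧ Tendsto u atTop (𝓝 f) := by
  classical
  cases finite_or_infinite X with
  | inl hfin =>
      exact mem_closure_iff_seq_limit.mp hf
  | inr hinfX =>
      obtain ⟨u, hu_cont, hu_inf⟩ := exists_infinite_range X
      obtain ⟨vv, δ, hvT, hδ, hsep'⟩ := exists_sep_family hu_inf
      choose xw hxw using hvT
      set t : ℕ → X → ℝ := fun m x => min 1 (|u x - vv m| / δ m) with ht
      have htc : ∀ m, Continuous (t m) := fun m =>
        continuous_const.min (((hu_cont.sub continuous_const).abs).div_const _)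
      set hh : CpS X → ℕ → X → ℝ :=
        fun a m x => min 1 (max 0 (2 - 2*((m:ℝ)+1)*|a.1 x - f.1 x|)) with hhdef
      have hhc : ∀ a m, Continuous (hh a m) := fun a m =>
        continuous_const.min (continuous_const.max
          (continuous_const.sub (continuous_const.mul ((a.2.sub f.2).abs))))
      set Φ : CpS X → ℕ → CpS X → CpS X :=
        fun dd m aa => ⟨fun x => dd.1 x * (t m x * hh aa m x),
          dd.2.mul ((htc m).mul (hhc aa m))⟩ with hΦ
      set E : Set (CpS X) := ⋃ m, Set.image2 (fun dd aa => Φ dd m aa) D₀ A with hE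
      have hEc : E.Countable := countable_iUnion (fun m => hD₀c.image2 hA _)
      -- Density of E
      have hEd : Dense E := by
        rw [dense_iff_inter_open]
        rintro U hUo ⟨⟨gf, hgc⟩, hgU⟩
        have hUn : U ∈ 𝓝 (⟨gf, hgc⟩ : CpS X) := hUo.mem_nhds hgU
        rw [nhds_subtype_eq_comap, mem_comap] at hUn
        obtain ⟨Vs, hVs, hVU⟩ := hUn
        rw [nhds_pi, Filter.mem_pi] at hVs
        obtain ⟨I, hIfin, tt, htt, hpi⟩ := hVs
        choose ε hε hball using fun x => Metric.mem_nhds_iff.mp (htt x)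
        -- find a good index m
        set bad : Set ℕ := ⋃ x ∈ I, {m : ℕ | |u x - vv m| < δ m} with hbaddef
        have hbadfin : bad.Finite := by
          refine hIfin.biUnion (fun x _ => Set.Subsingleton.finite ?_)
          intro m hm m' hm'
          by_contra hne
          have := hsep' m m' hne
          have h1 : |vv m - vv m'| ≤ |u x - vv m| + |u x - vv m'| := by
            calc |vv m - vv m'| = |(u x - vv m') - (u x - vv m)| := by ring_nf
              _ ≤ |u x - vv m'| + |u x - vv m| := abs_sub _ _
              _ = |u x - vv m| + |u x - vv m'| := by ring
          have hm2 : |u x - vv m| < δ m := hm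
          have hm2' : |u x - vv m'| < δ m' := hm'
          linarith
        obtain ⟨m, hm⟩ := hbadfin.infinite_compl.nonempty
        have hmgood : ∀ x ∈ I, δ m ≤ |u x - vv m| := by
          intro x hxI
          by_contra hcon
          exact hm (mem_biUnion hxI (not_le.mp hcon))
        -- pick aa ∈ A close to f on I
        set r : ℝ := 1/(2*((m:ℝ)+1)) with hrdef
        have hr0 : 0 < r := by positivity
        set N : Set (CpS X) := ⋂ x ∈ I, (fun h' : CpS X => h'.1 x) ⁻¹' Metric.ball (f.1 x) r
          with hNdef
        have hNo : IsOpen N := by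
          refine hIfin.isOpen_biInter (fun x _ => ?_)
          exact (Metric.isOpen_ball).preimage ((continuous_apply x).comp continuous_subtype_val)
        have hfN : f ∈ N := by
          refine mem_iInter₂.mpr (fun x _ => ?_)
          exact Metric.mem_ball_self hr0
        obtain ⟨aa, haN, haA⟩ := mem_closure_iff.mp hf N hNo hfN
        -- pick dd ∈ D₀ close to gf on I
        set Wd : Set (CpS X) := ⋂ x ∈ I, (fun h' : CpS X => h'.1 x) ⁻¹' Metric.ball (gf x) (ε x)
          with hWdef
        have hWo : IsOpen Wd := by
          refine hIfin.isOpen_biInter (fun x _ => ?_)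
          exact (Metric.isOpen_ball).preimage ((continuous_apply x).comp continuous_subtype_val)
        have hgW : (⟨gf, hgc⟩ : CpS X) ∈ Wd := by
          refine mem_iInter₂.mpr (fun x _ => ?_)
          exact Metric.mem_ball_self (hε x)
        obtain ⟨dd, hdD₀, hdW⟩ := hD₀d.exists_mem_open hWo ⟨_, hgW⟩
        refine ⟨Φ dd m aa, ?_, ?_⟩
        · apply hVU
          show (Φ dd m aa).1 ∈ Vs
          apply hpi
          intro x hxI
          have ht1 : t m x = 1 := by
            show min 1 (|u x - vv m| / δ m) = 1
            refine min_eq_left ?_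
            rw [le_div_iff₀ (hδ m)]
            simpa using hmgood x hxI
          have hh1 : hh aa m x = 1 := by
            have haq : |aa.1 x - f.1 x| < r := by
              have := mem_iInter₂.mp haN x hxI
              simpa [Real.dist_eq] using this
            have hq : 2*((m:ℝ)+1)*|aa.1 x - f.1 x| < 1 := by
              have h2m : (0:ℝ) < 2*((m:ℝ)+1) := by positivity
              rw [hrdef] at haq
              have h3 := mul_lt_mul_of_pos_left haq h2m
              rw [mul_one_div, div_self (ne_of_gt h2m)] at h3
              exact h3
            show min 1 (max 0 (2 - 2*((m:ℝ)+1)*|aa.1 x - f.1 x|)) = 1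
            have h2 : (1:ℝ) ≤ 2 - 2*((m:ℝ)+1)*|aa.1 x - f.1 x| := by linarith
            rw [max_eq_right (by linarith : (0:ℝ) ≤ _)]
            exact min_eq_left h2
          have heval : (Φ dd m aa).1 x = dd.1 x := by
            show dd.1 x * (t m x * hh aa m x) = dd.1 x
            rw [ht1, hh1]; ring
          rw [heval]
          apply hball x
          have := mem_iInter₂.mp hdW x hxI
          simpa [Real.dist_eq] using this
        · exact mem_iUnion.mpr ⟨m, Set.mem_image2_of_mem hdD₀ haA⟩
      -- apply strong sequential separability to E and the constant-one function
      set one : CpS X := ⟨fun _ => (1:ℝ), continuous_const⟩ with hone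
      obtain ⟨ws, hwsE, hwst⟩ := hssd E hEc hEd one
      have hwsE' : ∀ n, ∃ m dd aa, dd ∈ D₀ ∧ aa ∈ A ∧ Φ dd m aa = ws n := by
        intro n
        have := hwsE n
        rw [hE, mem_iUnion] at this
        obtain ⟨m, hmem⟩ := this
        rw [Set.mem_image2] at hmem
        obtain ⟨dd, hdd, aa, haa, heq⟩ := hmem
        exact ⟨m, dd, aa, hdd, haa, heq⟩
      choose M dd aa hdd haa heq using hwsE'
      have hpt : ∀ x, Tendsto (fun n => (ws n).1 x) atTop (𝓝 1) := by
        intro x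
        have hcont : Continuous (fun h' : CpS X => h'.1 x) :=
          (continuous_apply x).comp continuous_subtype_val
        exact (hcont.tendsto one).comp hwst
      have hevpos : ∀ x, ∀ᶠ n in atTop, 0 < (ws n).1 x :=
        fun x => Tendsto.eventually_const_lt zero_lt_one (hpt x)
      have hMne : ∀ m, ∀ᶠ n in atTop, M n ≠ m := by
        intro m
        filter_upwards [hevpos (xw m)] with n hn
        intro hMn
        have hz : (ws n).1 (xw m) = 0 := by
          rw [← heq n]
          show (dd n).1 (xw m) * (t (M n) (xw m) * hh (aa n) (M n) (xw m)) = 0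
          have : t (M n) (xw m) = 0 := by
            show min 1 (|u (xw m) - vv (M n)| / δ (M n)) = 0
            rw [hMn, hxw m]
            simp
          rw [this]; ring
        rw [hz] at hn
        exact lt_irrefl _ hn
      have hMtop : Tendsto M atTop atTop := by
        rw [tendsto_atTop]
        intro b
        have hev := (eventually_all_finset (Finset.range b)).mpr (fun m _ => hMne m)
        filter_upwards [hev] with n hn
        by_contra hlt
        push_neg at hlt
        exact hn (M n) (Finset.mem_range.mpr hlt) rfl
      refine ⟨aa, haa, ?_⟩
      rw [tendsto_subtype_rng, tendsto_pi_nhds]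
      intro x
      rw [tendsto_iff_dist_tendsto_zero]
      have hbndto : Tendsto (fun n => 1/((M n:ℝ)+1)) atTop (𝓝 0) :=
        tendsto_one_div_add_atTop_nhds_zero_nat.comp hMtop
      refine squeeze_zero' (Eventually.of_forall (fun n => dist_nonneg)) ?_ hbndto
      filter_upwards [hevpos x] with n hn
      rw [Real.dist_eq]
      by_contra hcon
      push_neg at hcon
      have hq : 1/((M n:ℝ)+1) < |(aa n).1 x - f.1 x| := hcon
      have hMp : (0:ℝ) < (M n:ℝ)+1 := by positivity
      have hzle : 2 - 2*((M n:ℝ)+1)*|(aa n).1 x - f.1 x| ≤ 0 := by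
        have h3 := mul_lt_mul_of_pos_left hq hMp
        rw [mul_one_div, div_self (ne_of_gt hMp)] at h3
        nlinarith
      have hh0 : hh (aa n) (M n) x = 0 := by
        show min 1 (max 0 (2 - 2*((M n:ℝ)+1)*|(aa n).1 x - f.1 x|)) = 0
        rw [max_eq_left hzle]
        simp
      have hz : (ws n).1 x = 0 := by
        rw [← heq n]
        show (dd n).1 x * (t (M n) x * hh (aa n) (M n) x) = 0
        rw [hh0]; ring
      rw [hz] at hn
      exact lt_irrefl _ hn

end CpSSSAux

open CpSSSAux

theorem Cp_stronglySeqSeparable_iff_countable_FU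
    (X : Type*) [TopologicalSpace X] [CompletelyRegularSpace X] [T2Space X]
    (hsep : SeparableSpace {f : X → ℝ // Continuous f}) :
    StronglySeqSeparable {f : X → ℝ // Continuous f} ↔
      ∀ S : Set {f : X → ℝ // Continuous f}, S.Countable → FrechetUrysohnSpace S := by
  constructor
  · rintro ⟨hsep', hssd⟩ S hS
    obtain ⟨D₀, hD₀c, hD₀d⟩ := @exists_countable_dense _ _ hsep'
    refine ⟨fun s y hy => ?_⟩
    have hAc : (Subtype.val '' s).Countable := hS.mono (Subtype.coe_image_subset S s)
    have hyc : (y : CpS X) ∈ closure (Subtype.val '' s) := closure_subtype.mp hy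
    obtain ⟨u, huA, hut⟩ := core hssd D₀ hD₀c hD₀d _ hAc _ hyc
    choose uu huu huuval using huA
    refine ⟨uu, huu, ?_⟩
    rw [tendsto_subtype_rng]
    have : (fun n => ((uu n : ↥S) : CpS X)) = u := funext fun n => huuval n
    rw [this]
    exact hut
  · intro hFU
    refine ⟨hsep, ?_⟩
    intro D hDc hDd y
    haveI := hFU (insert y D) (hDc.insert y)
    set y' : ↥(insert y D) := ⟨y, mem_insert _ _⟩ with hy'
    have hys : y' ∈ closure {z : ↥(insert y D) | (z : CpS X) ∈ D} := by
      rw [closure_subtype]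
      have himg : Subtype.val '' {z : ↥(insert y D) | (z : CpS X) ∈ D} = D := by
        ext w
        constructor
        · rintro ⟨z, hz, rfl⟩; exact hz
        · intro hw; exact ⟨⟨w, mem_insert_of_mem _ hw⟩, hw, rfl⟩
      rw [himg]
      exact hDd _
    obtain ⟨x, hx, hxt⟩ := mem_closure_iff_seq_limit.mp hys
    exact ⟨fun n => (x n : CpS X), fun n => hx n,
      (continuous_subtype_val.tendsto y').comp hxt⟩
end
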